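/- For all real numbers φ, θ, z: exp(φ•(cos θ • X + sin θ • Y)) · exp(z•Z) equals the 2×2 complex matrix with rows (cos(φ/2)·e^{iz/2}, e^{i(θ−z/2)}·sin(φ/2)) and (−e^{−i(θ−z/2)}·sin(φ/2), cos(φ/2)·e^{−iz/2}). -/

import Mathlib

open scoped Matrix

/-- Halved Pauli matrix `X` generating `su(2)`. -/
noncomputable def X : Matrix (Fin 2) (Fin 2) ℂ := (1 / 2 : ℂ) • !![0, 1; -1, 0]

/-- Halved Pauli matrix `Y` generating `su(2)`. -/
noncomputable def Y : Matrix (Fin 2) (Fin 2) ℂ :=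
  (1 / 2 : ℂ) • !![0, Complex.I; Complex.I, 0]

/-- Halved Pauli matrix `Z` generating `su(2)`. -/
noncomputable def Z : Matrix (Fin 2) (Fin 2) ℂ :=
  (1 / 2 : ℂ) • !![Complex.I, 0; 0, -Complex.I]
/-!
Both exponents are real multiples of matrices squaring to `-1`: `φ • (cos θ • X + sin θ • Y)`
is `φ/2` times the off-diagonal matrix with entries `e^{iθ}, -e^{-iθ}`, and `z • Z` is `z/2`
times `diag(i, -i)`. In a normed real algebra, `M * M = -1` gives Euler's formula
`exp (t • M) = cos t + sin t • M`, since `ℂ → A`, `i ↦ M` is a continuous algebra map and such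
maps commute with `exp`. Multiplying the two resulting matrices gives the claim.
-/

open Complex

theorem exp_smul_of_mul_self_eq_neg_one {A : Type*} [NormedRing A] [NormedAlgebra ℝ A]
    [Algebra ℚ A] (M : A) (hM : M * M = -1) (t : ℝ) :
    NormedSpace.exp (t • M) = Real.cos t • (1 : A) + Real.sin t • M := by
  let f := liftAux M hM
  have hf : Continuous f := f.toLinearMap.continuous_of_finiteDimensional
  have hft : f (t * I) = t • M := by simp [f, liftAux_apply]
  rw [← hft, ← NormedSpace.map_exp f hf, ← exp_eq_exp_ℂ, exp_mul_I]
  simp [f, liftAux_apply, Algebra.algebraMap_eq_smul_one, cos_ofReal_re, sin_ofReal_re]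

theorem Matrix.exp_smul_of_mul_self_eq_neg_one {n : Type*} [Fintype n] [DecidableEq n]
    (M : Matrix n n ℂ) (hM : M * M = -1) (t : ℝ) :
    NormedSpace.exp (t • M) = Real.cos t • (1 : Matrix n n ℂ) + Real.sin t • M := by
  -- `exp` only sees the topology, so any algebra norm on matrices will do
  let _ := Matrix.linftyOpNormedRing (n := n) (α := ℂ)
  let _ := Matrix.linftyOpNormedAlgebra (n := n) (R := ℝ) (α := ℂ)
  exact _root_.exp_smul_of_mul_self_eq_neg_one M hM t

theorem exp_smul_offDiag_exp_I (t θ : ℝ) :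
    NormedSpace.exp (t • !![0, exp (I * θ); -exp (-(I * θ)), 0]) =
      !![(Real.cos t : ℂ), exp (I * θ) * Real.sin t;
        -(exp (-(I * θ)) * Real.sin t), Real.cos t] := by
  rw [Matrix.exp_smul_of_mul_self_eq_neg_one]
  · ext i j; fin_cases i <;> fin_cases j <;> simp [real_smul, mul_comm]
  · rw [Matrix.mul_fin_two]
    simp [Matrix.one_fin_two, ← exp_add]

theorem exp_smul_diag_I (t : ℝ) :
    NormedSpace.exp (t • !![I, 0; 0, -I]) = !![exp (I * t), 0; 0, exp (-(I * t))] := by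
  rw [Matrix.exp_smul_of_mul_self_eq_neg_one]
  · ext i j; fin_cases i <;> fin_cases j <;>
      simp [Complex.ext_iff, exp_re, exp_im, cos_ofReal_re, sin_ofReal_re]
  · rw [Matrix.mul_fin_two]
    simp [Matrix.one_fin_two]

theorem smul_cos_smul_X_add_sin_smul_Y (φ θ : ℝ) :
    φ • (Real.cos θ • X + Real.sin θ • Y) =
      (φ / 2) • !![0, exp (I * θ); -exp (-(I * θ)), 0] := by
  ext i j; fin_cases i <;> fin_cases j <;>
    simp [X, Y, Complex.ext_iff, exp_re, exp_im, cos_ofReal_re, sin_ofReal_re] <;>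
    constructor <;> ring

theorem smul_Z (z : ℝ) : z • Z = (z / 2) • !![I, 0; 0, -I] := by
  ext i j; fin_cases i <;> fin_cases j <;> simp [Z, real_smul] <;> ring

theorem su2_cylindrical_matrix (φ θ z : ℝ) :
    NormedSpace.exp (φ • (Real.cos θ • X + Real.sin θ • Y)) *
        NormedSpace.exp (z • Z) =
      !![(Real.cos (φ / 2) : ℂ) * Complex.exp (Complex.I * ((z / 2 : ℝ) : ℂ)),
          Complex.exp (Complex.I * ((θ - z / 2 : ℝ) : ℂ)) * (Real.sin (φ / 2) : ℂ);
          -(Complex.exp (-(Complex.I * ((θ - z / 2 : ℝ) : ℂ))) * (Real.sin (φ / 2) : ℂ)),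
          (Real.cos (φ / 2) : ℂ) * Complex.exp (-(Complex.I * ((z / 2 : ℝ) : ℂ)))] := by
  rw [smul_cos_smul_X_add_sin_smul_Y, smul_Z, exp_smul_offDiag_exp_I, exp_smul_diag_I,
    Matrix.mul_fin_two, ofReal_sub, mul_sub, sub_eq_add_neg, neg_add, neg_neg, exp_add, exp_add]
  ext i j; fin_cases i <;> fin_cases j <;> simp <;> ring
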